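/- arXiv:2405.07151 — 6 statements merged into one kernel-verified Lean document; each statement's English description precedes it below -/
import Mathlib

section
/- Let B be an (s+1)×s binary (0-1) matrix for some s > 0. Then there exists a non-empty subset P ⊆ {1,…,s+1} of row indices such that the number of column indices j with B_{i,j} = 1 for every i ∈ P equals |P| − 1. -/
open Finset

section Aux

variable {s : ℕ}

/-- Set identity for the "good pair" branch: rows of `insert v W''` all have a one at `y`,
so the `D`-zeros of `insert v W''` split into the zeros of `v` (inside `D.erase y`) and the
zeros of `W''` among the remaining columns. -/
lemma branch_key1 (B : Fin (s + 1) → Fin s → Bool) (W'' : Finset (Fin (s + 1)))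
    (v : Fin (s + 1)) (D : Finset (Fin s)) (y : Fin s) (hy : y ∈ D)
    (hBvy : B v y = true) (hWy : ∀ i ∈ W'', B i y = true) :
    D.filter (fun j => ∃ i ∈ insert v W'', B i j = false)
      = ((D.erase y).filter (fun j => B v j = false))
        ∪ (((D.erase y) \ ((D.erase y).filter (fun j => B v j = false))).filter
            (fun j => ∃ i ∈ W'', B i j = false)) := by
  ext j
  simp only [mem_filter, mem_union, mem_insert, mem_erase, mem_sdiff]
  constructor
  · rintro ⟨hjD, i, hi, hB⟩
    have hjy : j ≠ y := by
      rintro rfl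
      rcases hi with rfl | hiW
      · rw [hBvy] at hB; exact absurd hB (by simp)
      · rw [hWy i hiW] at hB; exact absurd hB (by simp)
    by_cases hBvj : B v j = false
    · exact Or.inl ⟨⟨hjy, hjD⟩, hBvj⟩
    · have hiW : i ∈ W'' := by
        rcases hi with rfl | h
        · exact absurd hB hBvj
        · exact h
      exact Or.inr ⟨⟨⟨hjy, hjD⟩, fun h => hBvj h.2⟩, i, hiW, hB⟩
  · rintro (⟨⟨hjy, hjD⟩, hBvj⟩ | ⟨⟨⟨hjy, hjD⟩, -⟩, i, hiW, hB⟩)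
    · exact ⟨hjD, v, Or.inl rfl, hBvj⟩
    · exact ⟨hjD, i, Or.inr hiW, hB⟩

/-- Set identity for the "u-seed" branch: `u` has a zero at `y`, so the `D`-zeros of
`insert u W''` are `y`, the zeros of `u` in `D.erase y`, and the zeros of `W''` among the
remaining columns. -/
lemma branch_key2 (B : Fin (s + 1) → Fin s → Bool) (W'' : Finset (Fin (s + 1)))
    (u : Fin (s + 1)) (D : Finset (Fin s)) (y : Fin s) (hy : y ∈ D)
    (hBuy : B u y = false) :
    D.filter (fun j => ∃ i ∈ insert u W'', B i j = false)
      = insert y (((D.erase y).filter (fun j => B u j = false))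
        ∪ (((D.erase y) \ ((D.erase y).filter (fun j => B u j = false))).filter
            (fun j => ∃ i ∈ W'', B i j = false))) := by
  ext j
  simp only [mem_filter, mem_union, mem_insert, mem_erase, mem_sdiff]
  constructor
  · rintro ⟨hjD, i, hi, hB⟩
    by_cases hjy : j = y
    · exact Or.inl hjy
    · right
      by_cases hBuj : B u j = false
      · exact Or.inl ⟨⟨hjy, hjD⟩, hBuj⟩
      · have hiW : i ∈ W'' := by
          rcases hi with rfl | h
          · exact absurd hB hBuj
          · exact h
        exact Or.inr ⟨⟨⟨hjy, hjD⟩, fun h => hBuj h.2⟩, i, hiW, hB⟩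
  · rintro (rfl | ⟨⟨hjy, hjD⟩, hBuj⟩ | ⟨⟨⟨hjy, hjD⟩, -⟩, i, hiW, hB⟩)
    · exact ⟨hy, u, Or.inl rfl, hBuy⟩
    · exact ⟨hjD, u, Or.inl rfl, hBuj⟩
    · exact ⟨hjD, i, Or.inr hiW, hB⟩

/-- Double-counting lemma: if the matrix restricted to `R × D` (with `|R| = |D| + 1`) has the
property that every `1`-entry `(v, y)` satisfies (column-count of ones at `y`) ≤ (row-count of
ones at `v`), then some row of `R` is identically `false` on `D`. -/
lemma lemF (B : Fin (s + 1) → Fin s → Bool) (R : Finset (Fin (s + 1))) (D : Finset (Fin s))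
    (hcard : R.card = D.card + 1)
    (hedge : ∀ v ∈ R, ∀ y ∈ D, B v y = true →
      (R.filter (fun i => B i y = true)).card ≤ (D.filter (fun j => B v j = true)).card) :
    ∃ i ∈ R, ∀ j ∈ D, B i j = false := by
  by_contra hcon
  push_neg at hcon
  have ho : ∀ v ∈ R, 0 < (D.filter (fun j => B v j = true)).card := by
    intro v hv
    obtain ⟨j, hj, hbj⟩ := hcon v hv
    have hb : B v j = true := by
      cases h : B v j
      · exact absurd h hbj
      · rfl
    exact card_pos.mpr ⟨j, mem_filter.mpr ⟨hj, hb⟩⟩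
  -- the left-hand double sum equals |R|
  have hS : ∑ v ∈ R, ∑ y ∈ D.filter (fun y => B v y = true),
      (((D.filter (fun j => B v j = true)).card : ℚ))⁻¹ = (R.card : ℚ) := by
    rw [Finset.sum_congr rfl (fun v hv => ?_), Finset.sum_const, nsmul_eq_mul, mul_one]
    rw [Finset.sum_const, nsmul_eq_mul]
    exact mul_inv_cancel₀ (by exact_mod_cast (ho v hv).ne')
  -- the right-hand double sum is at most |D|
  have hT : ∑ y ∈ D, ∑ v ∈ R.filter (fun v => B v y = true),
      (((R.filter (fun i => B i y = true)).card : ℚ))⁻¹ ≤ (D.card : ℚ) := by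
    calc ∑ y ∈ D, ∑ v ∈ R.filter (fun v => B v y = true),
        (((R.filter (fun i => B i y = true)).card : ℚ))⁻¹
        ≤ ∑ y ∈ D, 1 := by
          apply Finset.sum_le_sum
          intro y hy
          rw [Finset.sum_const, nsmul_eq_mul]
          rcases Nat.eq_zero_or_pos (R.filter (fun i => B i y = true)).card with h0 | hpos
          · rw [h0]; simp
          · rw [mul_inv_cancel₀ (by exact_mod_cast hpos.ne')]
      _ = (D.card : ℚ) := by rw [Finset.sum_const, nsmul_eq_mul, mul_one]
  -- compare the two double sums edgewise
  have hST : ∑ v ∈ R, ∑ y ∈ D.filter (fun y => B v y = true),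
      (((D.filter (fun j => B v j = true)).card : ℚ))⁻¹
      ≤ ∑ y ∈ D, ∑ v ∈ R.filter (fun v => B v y = true),
      (((R.filter (fun i => B i y = true)).card : ℚ))⁻¹ := by
    have lhs : ∑ v ∈ R, ∑ y ∈ D.filter (fun y => B v y = true),
        (((D.filter (fun j => B v j = true)).card : ℚ))⁻¹
        = ∑ v ∈ R, ∑ y ∈ D, (if B v y = true then
            (((D.filter (fun j => B v j = true)).card : ℚ))⁻¹ else 0) := by
      refine Finset.sum_congr rfl (fun v _ => ?_)
      rw [Finset.sum_filter]
    have rhs : ∑ y ∈ D, ∑ v ∈ R.filter (fun v => B v y = true),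
        (((R.filter (fun i => B i y = true)).card : ℚ))⁻¹
        = ∑ v ∈ R, ∑ y ∈ D, (if B v y = true then
            (((R.filter (fun i => B i y = true)).card : ℚ))⁻¹ else 0) := by
      rw [Finset.sum_comm]
      refine Finset.sum_congr rfl (fun v _ => ?_)
      rw [Finset.sum_filter]
    rw [lhs, rhs]
    refine Finset.sum_le_sum (fun v hv => Finset.sum_le_sum (fun y hy => ?_))
    by_cases hB : B v y = true
    · simp only [hB, if_true]
      have hw : 0 < (R.filter (fun i => B i y = true)).card :=
        card_pos.mpr ⟨v, mem_filter.mpr ⟨hv, hB⟩⟩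
      have hwo := hedge v hv y hy hB
      have h1 : (0 : ℚ) < ((R.filter (fun i => B i y = true)).card : ℚ) := by
        exact_mod_cast hw
      have h2 : ((R.filter (fun i => B i y = true)).card : ℚ)
          ≤ ((D.filter (fun j => B v j = true)).card : ℚ) := by exact_mod_cast hwo
      exact inv_anti₀ h1 h2
    · simp [hB]
  have : (R.card : ℚ) ≤ (D.card : ℚ) := by
    calc (R.card : ℚ) = _ := hS.symm
      _ ≤ _ := hST
      _ ≤ _ := hT
  have : R.card ≤ D.card := by exact_mod_cast this
  omega

/-- Main auxiliary lemma (zeros form): if `|D| < τ ≤ |R|` then there is a nonempty `W ⊆ R`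
with `|W| + #{j ∈ D : ∃ i ∈ W, B i j = 0} = τ`. -/
lemma aux (B : Fin (s + 1) → Fin s → Bool) :
    ∀ n (R : Finset (Fin (s + 1))) (D : Finset (Fin s)) (τ : ℕ),
      R.card + D.card ≤ n → D.card < τ → τ ≤ R.card →
      ∃ W, W ⊆ R ∧ W.Nonempty ∧
        W.card + (D.filter (fun j => ∃ i ∈ W, B i j = false)).card = τ := by
  intro n
  induction n with
  | zero =>
    intro R D τ hn hDτ hτR
    exfalso; omega
  | succ n IH =>
    intro R D τ hn hDτ hτR
    rcases Nat.lt_or_ge τ R.card with hlt | hge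
    · -- drop a row
      have hR : R.Nonempty := card_pos.mp (by omega)
      obtain ⟨i, hi⟩ := hR
      obtain ⟨W, hsub, hne, hval⟩ :=
        IH (R.erase i) D τ (by rw [card_erase_of_mem hi]; omega) hDτ
          (by rw [card_erase_of_mem hi]; omega)
      exact ⟨W, hsub.trans (erase_subset _ _), hne, hval⟩
    · have hτ : τ = R.card := le_antisymm hτR hge
      rcases D.eq_empty_or_nonempty with rfl | hD
      · refine ⟨R, subset_rfl, card_pos.mp (by omega), ?_⟩
        simp [hτ]
      · by_cases hGOOD : ∃ y ∈ D, ∃ v ∈ R, B v y = true ∧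
            (R.filter (fun i => B i y = false)).card
              ≤ ((D.erase y).filter (fun j => B v j = false)).card
        · -- good pair branch
          obtain ⟨y, hy, v, hv, hBvy, hUZ⟩ := hGOOD
          have hycard : 1 ≤ D.card := card_pos.mpr ⟨y, hy⟩
          have hZsub : ((D.erase y).filter (fun j => B v j = false)) ⊆ D.erase y :=
            filter_subset _ _
          have hZcard : ((D.erase y).filter (fun j => B v j = false)).card ≤ (D.erase y).card :=
            card_le_card hZsub
          have hDe : (D.erase y).card = D.card - 1 := card_erase_of_mem hy
          have hGcard : (((D.erase y) \ ((D.erase y).filter (fun j => B v j = false)))).card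
              = (D.erase y).card - ((D.erase y).filter (fun j => B v j = false)).card :=
            card_sdiff_of_subset hZsub
          have hvRy : v ∈ R.filter (fun i => B i y = true) := mem_filter.mpr ⟨hv, hBvy⟩
          have hpart : (R.filter (fun i => B i y = true)).card
              + (R.filter (fun i => B i y = false)).card = R.card := by
            have h1 := Finset.card_filter_add_card_filter_not
              (s := R) (p := fun i => B i y = true)
            have h2 : R.filter (fun i => ¬ (B i y = true)) = R.filter (fun i => B i y = false) := by
              apply filter_congr
              intro i _
              simp [Bool.not_eq_true]
            rw [h2] at h1
            exact h1
          have hRycard : (R.filter (fun i => B i y = true)).erase v ⊆ R := by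
            intro a ha
            exact mem_of_mem_filter a (mem_of_mem_erase ha)
          have hR'card : ((R.filter (fun i => B i y = true)).erase v).card
              = (R.filter (fun i => B i y = true)).card - 1 := card_erase_of_mem hvRy
          have hRyle : (R.filter (fun i => B i y = true)).card ≤ R.card :=
            card_le_card (filter_subset _ _)
          -- recursive call
          obtain ⟨W'', hWsub, hWne, hWval⟩ :=
            IH ((R.filter (fun i => B i y = true)).erase v)
              ((D.erase y) \ ((D.erase y).filter (fun j => B v j = false)))
              (τ - 1 - ((D.erase y).filter (fun j => B v j = false)).card)
              (by omega) (by omega) (by omega)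
          have hvW : v ∉ W'' := fun h => (notMem_erase v _) (hWsub h)
          have hWy : ∀ i ∈ W'', B i y = true := by
            intro i hi
            exact (mem_filter.mp (mem_of_mem_erase (hWsub hi))).2
          refine ⟨insert v W'', ?_, insert_nonempty _ _, ?_⟩
          · exact insert_subset hv (hWsub.trans hRycard)
          · rw [branch_key1 B W'' v D y hy hBvy hWy]
            have hdisj : Disjoint ((D.erase y).filter (fun j => B v j = false))
                ((((D.erase y) \ ((D.erase y).filter (fun j => B v j = false)))).filter
                  (fun j => ∃ i ∈ W'', B i j = false)) :=
              (sdiff_disjoint).symm.mono_right (filter_subset _ _)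
            rw [card_union_of_disjoint hdisj, card_insert_of_notMem hvW]
            omega
        · -- no good pair
          push_neg at hGOOD
          by_cases ht : D.card + 1 = τ
          · -- tight case: double counting gives an all-zero row
            have hedge : ∀ v ∈ R, ∀ y ∈ D, B v y = true →
                (R.filter (fun i => B i y = true)).card
                  ≤ (D.filter (fun j => B v j = true)).card := by
              intro v hv y hy hB
              have hlt := hGOOD y hy v hv hB
              have e1 : (D.filter (fun j => B v j = true)).card
                  + (D.filter (fun j => B v j = false)).card = D.card := by
                have h1 := Finset.card_filter_add_card_filter_not
                  (s := D) (p := fun j => B v j = true)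
                have h2 : D.filter (fun j => ¬ (B v j = true))
                    = D.filter (fun j => B v j = false) := by
                  apply filter_congr
                  intro j _
                  simp [Bool.not_eq_true]
                rw [h2] at h1
                exact h1
              have e2 : D.filter (fun j => B v j = false)
                  = (D.erase y).filter (fun j => B v j = false) := by
                ext j
                simp only [mem_filter, mem_erase]
                constructor
                · rintro ⟨hjD, hBf⟩
                  refine ⟨⟨?_, hjD⟩, hBf⟩
                  rintro rfl
                  rw [hB] at hBf
                  exact absurd hBf (by simp)
                · rintro ⟨⟨-, hjD⟩, hBf⟩
                  exact ⟨hjD, hBf⟩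
              have e3 : (R.filter (fun i => B i y = true)).card
                  + (R.filter (fun i => B i y = false)).card = R.card := by
                have h1 := Finset.card_filter_add_card_filter_not
                  (s := R) (p := fun i => B i y = true)
                have h2 : R.filter (fun i => ¬ (B i y = true))
                    = R.filter (fun i => B i y = false) := by
                  apply filter_congr
                  intro i _
                  simp [Bool.not_eq_true]
                rw [h2] at h1
                exact h1
              rw [e2] at e1
              omega
            obtain ⟨i, hiR, hiz⟩ := lemF B R D (by omega) hedge
            refine ⟨{i}, singleton_subset_iff.mpr hiR, singleton_nonempty _, ?_⟩
            have hfull : D.filter (fun j => ∃ i' ∈ ({i} : Finset (Fin (s+1))), B i' j = false)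
                = D := by
              apply filter_true_of_mem
              intro j hj
              exact ⟨i, mem_singleton_self i, hiz j hj⟩
            rw [hfull, card_singleton]
            omega
          · -- τ ≥ D.card + 2 : u-seed branch
            obtain ⟨y, hy⟩ := hD
            have hycard : 1 ≤ D.card := card_pos.mpr ⟨y, hy⟩
            have hU : ∃ u ∈ R, B u y = false := by
              by_contra h
              push_neg at h
              have hRne : R.Nonempty := card_pos.mp (by omega)
              obtain ⟨v, hv⟩ := hRne
              have hBvy : B v y = true := by
                cases hb : B v y
                · exact absurd hb (h v hv)
                · rfl
              have hlt := hGOOD y hy v hv hBvy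
              have hempty : R.filter (fun i => B i y = false) = ∅ := by
                apply filter_eq_empty_iff.mpr
                intro i hi
                exact h i hi
              rw [hempty] at hlt
              simp at hlt
            obtain ⟨u, hu, hBuy⟩ := hU
            have hZsub : ((D.erase y).filter (fun j => B u j = false)) ⊆ D.erase y :=
              filter_subset _ _
            have hZcard : ((D.erase y).filter (fun j => B u j = false)).card
                ≤ (D.erase y).card := card_le_card hZsub
            have hDe : (D.erase y).card = D.card - 1 := card_erase_of_mem hy
            have hGcard : (((D.erase y) \ ((D.erase y).filter (fun j => B u j = false)))).card
                = (D.erase y).card - ((D.erase y).filter (fun j => B u j = false)).card :=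
              card_sdiff_of_subset hZsub
            have hR'card : (R.erase u).card = R.card - 1 := card_erase_of_mem hu
            obtain ⟨W'', hWsub, hWne, hWval⟩ :=
              IH (R.erase u)
                ((D.erase y) \ ((D.erase y).filter (fun j => B u j = false)))
                (τ - 2 - ((D.erase y).filter (fun j => B u j = false)).card)
                (by omega) (by omega) (by omega)
            have huW : u ∉ W'' := fun h => (notMem_erase u _) (hWsub h)
            refine ⟨insert u W'', ?_, insert_nonempty _ _, ?_⟩
            · exact insert_subset hu (hWsub.trans (erase_subset _ _))
            · rw [branch_key2 B W'' u D y hy hBuy]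
              have hdisj : Disjoint ((D.erase y).filter (fun j => B u j = false))
                  ((((D.erase y) \ ((D.erase y).filter (fun j => B u j = false)))).filter
                    (fun j => ∃ i ∈ W'', B i j = false)) :=
                (sdiff_disjoint).symm.mono_right (filter_subset _ _)
              have hynotin : y ∉ ((D.erase y).filter (fun j => B u j = false))
                  ∪ ((((D.erase y) \ ((D.erase y).filter (fun j => B u j = false)))).filter
                    (fun j => ∃ i ∈ W'', B i j = false)) := by
                simp only [mem_union, mem_filter, mem_erase, mem_sdiff]
                rintro (⟨⟨hyy, -⟩, -⟩ | ⟨⟨⟨hyy, -⟩, -⟩, -⟩) <;> exact hyy rfl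
              rw [card_insert_of_notMem hynotin, card_union_of_disjoint hdisj,
                card_insert_of_notMem huW]
              omega

end Aux

/-- Let `B` be an `(s+1) × s` binary matrix for some `s > 0`. Then there
exists a non-empty subset `P ⊆ {1,…,s+1}` of row indices such that the number of columns `j`
with `B i j = 1` for every `i ∈ P` equals `|P| - 1`. -/
theorem stmt0 (s : ℕ) (hs : 0 < s) (B : Fin (s + 1) → Fin s → Bool) :
    ∃ P : Finset (Fin (s + 1)), P.Nonempty ∧
      (Finset.univ.filter (fun j : Fin s => ∀ i ∈ P, B i j = true)).card = P.card - 1 := by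
  obtain ⟨W, hWsub, hWne, hWval⟩ :=
    aux B ((s + 1) + s) Finset.univ Finset.univ (s + 1)
      (by simp) (by simp) (by simp)
  refine ⟨W, hWne, ?_⟩
  have hpart : (Finset.univ.filter (fun j : Fin s => ∀ i ∈ W, B i j = true)).card
      + (Finset.univ.filter (fun j : Fin s => ¬ ∀ i ∈ W, B i j = true)).card = s := by
    have h1 := Finset.card_filter_add_card_filter_not
      (s := (Finset.univ : Finset (Fin s))) (p := fun j => ∀ i ∈ W, B i j = true)
    simpa using h1
  have heq : Finset.univ.filter (fun j : Fin s => ¬ ∀ i ∈ W, B i j = true)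
      = Finset.univ.filter (fun j : Fin s => ∃ i ∈ W, B i j = false) := by
    apply Finset.filter_congr
    intro j _
    constructor
    · intro h
      push_neg at h
      obtain ⟨i, hi, hB⟩ := h
      refine ⟨i, hi, ?_⟩
      cases hb : B i j
      · rfl
      · exact absurd hb hB
    · rintro ⟨i, hi, hB⟩ h
      rw [h i hi] at hB
      exact absurd hB (by simp)
  rw [heq] at hpart
  have hWcard : 1 ≤ W.card := Finset.card_pos.mpr hWne
  have hWcard2 : W.card ≤ s + 1 := by
    calc W.card ≤ (Finset.univ : Finset (Fin (s+1))).card := Finset.card_le_card hWsub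
      _ = s + 1 := by simp
  omega
end

section
/- In the digraph representation G_D of a g-group complete-{s} PICOD(t) problem, let G be a maximum acyclic induced subgraph with distinct message labels, organized into layers L_1, L_2, …. Then every group of messages is partially present in at most one layer of G; that is, if (r,j) and (r',j') are nodes of G with j and j' in the same group, then (r,j) and (r',j') lie in the same layer. -/
/-- Receivers of a `g`-group complete-`{s}` PICOD problem with `m` groups:
a receiver is identified with the set of `s` groups forming its side information. -/
abbrev Recv (m s : ℕ) := {A : Finset (Fin m) // A.card = s}

/-- Nodes of the digraph representation: pairs `(r, j)` of a receiver and a message,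
where a message is a pair (group index, index within the group). -/
abbrev PNode (m g s : ℕ) := Recv m s × (Fin m × Fin g)

/-- Edge `(r, j) → (r', j')` of the digraph representation: message `j'` belongs to the
side information of receiver `r`, i.e. the group of `j'` is one of the groups of `r`. -/
def picodEdge {m g s : ℕ} (u v : PNode m g s) : Prop := v.2.1 ∈ u.1.val

/-- A set of nodes induces an acyclic subgraph. -/
def inducedAcyclic {m g s : ℕ} (GS : Finset (PNode m g s)) : Prop :=
  ∀ u, ¬ Relation.TransGen (fun a b => a ∈ GS ∧ b ∈ GS ∧ picodEdge a b) u u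

/-- All message labels of the nodes in `GS` are distinct. -/
def distinctLabels {m g s : ℕ} (GS : Finset (PNode m g s)) : Prop :=
  ∀ u ∈ GS, ∀ v ∈ GS, u.2 = v.2 → u = v

/-- Let `G` (node set `GS`) be a maximum acyclic induced subgraph with
distinct message labels of the digraph representation `G_D`, organized into layers `L`.
Then every group is partially present in at most one layer: any two nodes of `G` whose
message labels lie in the same group lie in the same layer. -/
theorem stmt4 (m g s t : ℕ)
    (D : Recv m s → Finset (Fin m × Fin g))
    (hDcard : ∀ r, (D r).card = t)
    (hDdisj : ∀ r, ∀ j ∈ D r, j.1 ∉ r.val)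
    (GS : Finset (PNode m g s))
    (hvalid : ∀ u ∈ GS, u.2 ∈ D u.1)
    (hacyc : inducedAcyclic GS)
    (hdist : distinctLabels GS)
    (hmax : ∀ GS' : Finset (PNode m g s), (∀ u ∈ GS', u.2 ∈ D u.1) →
      inducedAcyclic GS' → distinctLabels GS' → GS'.card ≤ GS.card)
    (L : PNode m g s → ℕ)
    (hLpos : ∀ v ∈ GS, 1 ≤ L v)
    (hL1 : ∀ v ∈ GS, (L v = 1 ↔ ∀ u ∈ GS, ¬ picodEdge u v))
    (hLi : ∀ v ∈ GS, ∀ i, 1 < i →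
      (L v = i ↔ (∀ u ∈ GS, picodEdge u v → L u < i) ∧
        ∃ u ∈ GS, picodEdge u v ∧ L u = i - 1)) :
    ∀ u ∈ GS, ∀ v ∈ GS, u.2.1 = v.2.1 → L u = L v := by
  intro u hu v hv hg
  have hpred : ∀ w : PNode m g s, picodEdge w u ↔ picodEdge w v := by
    intro w; unfold picodEdge; rw [hg]
  rcases Nat.lt_or_ge 1 (L u) with h1 | h1
  · exact ((hLi v hv (L u) h1).mpr (by
      obtain ⟨ha, w, hw, he, hl⟩ := (hLi u hu (L u) h1).mp rfl
      exact ⟨fun x hx he' => ha x hx ((hpred x).mpr he'), w, hw, (hpred w).mp he, hl⟩)).symm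
  · have hu1 : L u = 1 := le_antisymm h1 (hLpos u hu)
    have hno := (hL1 u hu).mp hu1
    exact hu1.trans ((hL1 v hv).mpr (fun x hx he' => hno x hx ((hpred x).mpr he'))).symm
end

section
/- In an acyclic induced subgraph G of the digraph representation G_D of a g-group complete-{s} PICOD(t) problem, if j is the message label of a node in layer L_i and r is the receiver label of a node in layer L_k with k ≥ i, then message j is not in the side information M_r of r. -/
/-- In an acyclic induced subgraph `G` (node set `GS`, with distinct
message labels) of the digraph representation `G_D`, organized into layers `L`: if `j` is
the message label of a node in layer `i` and `r` is the receiver label of a node in layer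
`k ≥ i`, then message `j` is not in the side information of `r`. -/
theorem stmt5 (m g s t : ℕ)
    (D : Recv m s → Finset (Fin m × Fin g))
    (hDcard : ∀ r, (D r).card = t)
    (hDdisj : ∀ r, ∀ j ∈ D r, j.1 ∉ r.val)
    (GS : Finset (PNode m g s))
    (hvalid : ∀ u ∈ GS, u.2 ∈ D u.1)
    (hacyc : inducedAcyclic GS)
    (hdist : distinctLabels GS)
    (L : PNode m g s → ℕ)
    (hLpos : ∀ v ∈ GS, 1 ≤ L v)
    (hL1 : ∀ v ∈ GS, (L v = 1 ↔ ∀ u ∈ GS, ¬ picodEdge u v))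
    (hLi : ∀ v ∈ GS, ∀ i, 1 < i →
      (L v = i ↔ (∀ u ∈ GS, picodEdge u v → L u < i) ∧
        ∃ u ∈ GS, picodEdge u v ∧ L u = i - 1)) :
    ∀ u ∈ GS, ∀ w ∈ GS, L u ≤ L w → u.2.1 ∉ w.1.val := by
  intro u hu w hw hle hmem
  have hedge : picodEdge w u := hmem
  have hlt : L w < L u := by
    rcases eq_or_lt_of_le (hLpos u hu) with h1 | h1
    · exact absurd hedge ((hL1 u hu).mp h1.symm w hw)
    · exact ((hLi u hu (L u) h1).mp rfl).1 w hw hedge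
  omega
end

section
/- For the g-group complete-{s} PICOD(t) problem with m groups, the optimal broadcast rate satisfies R*(m,s,g,t) ≤ min{ s + t, ⌈t/(m−s)⌉·(m−s) }. -/
namespace Stmt8Aux

open Finset Matrix
open scoped Classical

variable {p m n : ℕ}

/-- Vandermonde-type MDS parity matrix over `ZMod p`. -/
noncomputable def vmat (p m n : ℕ) : Matrix (Fin n) (Fin m) (ZMod p) :=
  fun i j => ((j : ℕ) : ZMod p) ^ (i : ℕ)

lemma vmat_inj (hp : p.Prime) (hmp : m ≤ p) (A : Finset (Fin m)) (hA : Aᶜ.card = n)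
    (x y : Fin m → ZMod p) (hxy : ∀ j ∈ A, x j = y j)
    (hc : ∀ i : Fin n, ∑ j, vmat p m n i j * x j = ∑ j, vmat p m n i j * y j) :
    x = y := by
  haveI : Fact p.Prime := ⟨hp⟩
  set d : Fin m → ZMod p := fun j => x j - y j with hd
  have hdA : ∀ j ∈ A, d j = 0 := fun j hj => by simp [hd, hxy j hj]
  have hsum : ∀ i : Fin n, ∑ j, vmat p m n i j * d j = 0 := by
    intro i
    simp only [hd, mul_sub, Finset.sum_sub_distrib, hc i, sub_self]
  -- reindex the complement
  let e : Fin n ≃ {j // j ∈ Aᶜ} := (Finset.equivFinOfCardEq hA).symm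
  have hcompl : ∀ i : Fin n, ∑ a : Fin n, d (e a) * (((e a : Fin m) : ℕ) : ZMod p) ^ (i : ℕ) = 0 := by
    intro i
    have h1 : ∑ a : Fin n, d (e a) * (((e a : Fin m) : ℕ) : ZMod p) ^ (i : ℕ)
        = ∑ b : {j // j ∈ Aᶜ}, d b * (((b : Fin m) : ℕ) : ZMod p) ^ (i : ℕ) :=
      Equiv.sum_comp e (fun b : {j // j ∈ Aᶜ} => d b * (((b : Fin m) : ℕ) : ZMod p) ^ (i : ℕ))
    have h2 : ∑ b : {j // j ∈ Aᶜ}, d b * (((b : Fin m) : ℕ) : ZMod p) ^ (i : ℕ)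
        = ∑ j ∈ Aᶜ, d j * ((j : ℕ) : ZMod p) ^ (i : ℕ) :=
      Finset.sum_coe_sort Aᶜ (fun j : Fin m => d j * ((j : ℕ) : ZMod p) ^ (i : ℕ))
    have h3 : ∑ j ∈ A, d j * ((j : ℕ) : ZMod p) ^ (i : ℕ) = 0 :=
      Finset.sum_eq_zero fun j hj => by rw [hdA j hj, zero_mul]
    have h4 : (∑ j ∈ A, d j * ((j : ℕ) : ZMod p) ^ (i : ℕ))
        + ∑ j ∈ Aᶜ, d j * ((j : ℕ) : ZMod p) ^ (i : ℕ)
        = ∑ j, d j * ((j : ℕ) : ZMod p) ^ (i : ℕ) := Finset.sum_add_sum_compl A _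
    have h5 : ∑ j, d j * ((j : ℕ) : ZMod p) ^ (i : ℕ) = 0 := by
      have := hsum i
      simpa [vmat, mul_comm] using this
    rw [h1, h2]
    have := h4
    rw [h3, zero_add, h5] at this
    exact this
  have hfinj : Function.Injective (fun a : Fin n => (((e a : Fin m) : ℕ) : ZMod p)) := by
    intro a b hab
    have hval : ((e a : Fin m) : ℕ) = ((e b : Fin m) : ℕ) := by
      have ha : ((e a : Fin m) : ℕ) < p := lt_of_lt_of_le (Fin.is_lt _) hmp
      have hb : ((e b : Fin m) : ℕ) < p := lt_of_lt_of_le (Fin.is_lt _) hmp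
      have := congrArg ZMod.val hab
      rwa [ZMod.val_natCast_of_lt ha, ZMod.val_natCast_of_lt hb] at this
    apply e.injective
    exact Subtype.ext (Fin.ext hval)
  have hde : (fun a : Fin n => d (e a)) = 0 :=
    Matrix.eq_zero_of_forall_pow_sum_mul_pow_eq_zero hfinj hcompl
  funext j
  have hdj : d j = 0 := by
    by_cases hj : j ∈ A
    · exact hdA j hj
    · have hjc : j ∈ Aᶜ := Finset.mem_compl.mpr hj
      have : d (e (e.symm ⟨j, hjc⟩)) = 0 := congrFun hde (e.symm ⟨j, hjc⟩)
      simpa using this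
  have h' : x j - y j = 0 := hdj
  exact sub_eq_zero.mp h'

/-- Recover the full message vector from the side information on `A` and the parity symbols. -/
noncomputable def recover (p m n : ℕ) (A : Finset (Fin m)) (known : {j : Fin m // j ∈ A} → ZMod p)
    (c : Fin n → ZMod p) : Fin m → ZMod p :=
  if h : ∃ x : Fin m → ZMod p, (∀ a : {j : Fin m // j ∈ A}, x a = known a) ∧
      (∀ i : Fin n, ∑ j, vmat p m n i j * x j = c i)
  then h.choose else 0

lemma recover_eq (hp : p.Prime) (hmp : m ≤ p) (A : Finset (Fin m)) (hA : Aᶜ.card = n)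
    (X : Fin m → ZMod p) :
    recover p m n A (fun a => X a) (fun i => ∑ j, vmat p m n i j * X j) = X := by
  have h : ∃ x : Fin m → ZMod p, (∀ a : {j : Fin m // j ∈ A}, x a = X a) ∧
      (∀ i : Fin n, ∑ j, vmat p m n i j * x j = ∑ j, vmat p m n i j * X j) :=
    ⟨X, fun _ => rfl, fun _ => rfl⟩
  classical
  rw [recover]
  rw [dif_pos h]
  exact vmat_inj hp hmp A hA _ X
    (fun j hj => h.choose_spec.1 ⟨j, hj⟩) (fun i => (h.choose_spec.2 i))

end Stmt8Aux

set_option maxHeartbeats 2000000 in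
/-- **achievability.** For the `g`-group complete-`{s}` PICOD(`t`) problem
with `m` groups, the optimal broadcast rate satisfies
`R*(m,s,g,t) ≤ min { s + t, ⌈t/(m-s)⌉ (m-s) }`: there is a field `F`, a message length `L`,
a code length `l`, a decoding choice `D` and a pliable index code (encoder and per-receiver
decoders using only the broadcast and the receiver's side information) of rate `l / L` at
most the stated bound. -/
theorem stmt8 (m s g t : ℕ) (hm : 0 < m) (hg : 0 < g) (ht : 0 < t)
    (hsm : s < m) (htle : t ≤ m * g - s * g) :
    ∃ (F : Type) (_ : Field F) (_ : Fintype F) (L l : ℕ) (_ : 0 < L)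
      (D : Recv m s → Finset (Fin m × Fin g))
      (enc : ((Fin m × Fin g) → Fin L → F) → Fin l → F)
      (dec : (r : Recv m s) → (Fin l → F) →
        ({j : Fin m × Fin g // j.1 ∈ r.val} → Fin L → F) →
        (Fin m × Fin g) → Fin L → F),
      (∀ r, (D r).card = t) ∧
      (∀ r, ∀ j ∈ D r, j.1 ∉ r.val) ∧
      (∀ (r : Recv m s) (X : (Fin m × Fin g) → Fin L → F), ∀ j ∈ D r,
        dec r (enc X) (fun j' => X j'.val) j = X j) ∧
      (l : ℝ) / (L : ℝ) ≤
        min ((s : ℝ) + (t : ℝ))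
          ((⌈(t : ℝ) / ((m - s : ℕ) : ℝ)⌉ : ℝ) * ((m - s : ℕ) : ℝ)) := by
  classical
  set n := m - s with hn
  have hn0 : 0 < n := Nat.sub_pos_of_lt hsm
  have hnm : n ≤ m := Nat.sub_le m s
  have htng : t ≤ n * g := by
    have : m * g - s * g = (m - s) * g := (Nat.sub_mul m s g).symm
    rw [this] at htle; exact htle
  obtain ⟨p, hpm, hpp⟩ := Nat.exists_infinite_primes m
  haveI : Fact p.Prime := ⟨hpp⟩
  haveI : NeZero p := ⟨hpp.pos.ne'⟩
  set k0 := t / n with hk0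
  set t' := t % n with ht'
  have htdef : n * k0 + t' = t := Nat.div_add_mod t n
  have ht'n : t' < n := Nat.mod_lt t hn0
  set k : ℕ := if t' = 0 then k0 else k0 + 1 with hk
  have hkg : k ≤ g := by
    by_cases h0 : t' = 0
    · have : k0 ≤ g := by
        have := Nat.div_le_div_right (c := n) htng
        rwa [Nat.mul_div_cancel_left g hn0] at this
      simpa [hk, h0] using this
    · have hk0g : k0 < g := by
        by_contra hcon
        push_neg at hcon
        have h1 : n * g ≤ n * k0 := Nat.mul_le_mul_left n hcon
        have h2 : n * k0 ≤ t := by omega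
        have : t = n * g := le_antisymm htng (le_trans h1 h2)
        have : t' = 0 := by omega
        exact h0 this
      simp only [hk, if_neg h0]
      omega
  have hk0ltk : k0 ≤ k := by by_cases h0 : t' = 0 <;> simp [hk, h0]
  have hk0g : k0 ≤ g := le_trans hk0ltk hkg
  -- key facts for the ceiling
  have hmc : k0 * n = n * k0 := mul_comm _ _
  have hmc1 : (k0 + 1) * n = n * k0 + n := by ring
  have hkt : t ≤ k * n := by
    by_cases h0 : t' = 0
    · simp only [hk, if_pos h0]; omega
    · simp only [hk, if_neg h0]; omega
  have hknlt : k * n < t + n := by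
    by_cases h0 : t' = 0
    · simp only [hk, if_pos h0]; omega
    · simp only [hk, if_neg h0]; omega
  have hceil : (⌈(t : ℝ) / ((n : ℕ) : ℝ)⌉ : ℝ) = (k : ℝ) := by
    have hnR : (0 : ℝ) < (n : ℝ) := by exact_mod_cast hn0
    have h1 : (t : ℝ) / (n : ℝ) ≤ (k : ℝ) := by
      rw [div_le_iff₀ hnR]
      exact_mod_cast hkt
    have h2 : (k : ℝ) - 1 < (t : ℝ) / (n : ℝ) := by
      rw [lt_div_iff₀ hnR]
      have hcast : ((k * n : ℕ) : ℝ) < ((t + n : ℕ) : ℝ) := by exact_mod_cast hknlt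
      push_cast at hcast
      nlinarith
    have : ⌈(t : ℝ) / ((n : ℕ) : ℝ)⌉ = (k : ℤ) := by
      rw [Int.ceil_eq_iff]
      constructor
      · exact_mod_cast h2
      · exact_mod_cast h1
    rw [this]
    norm_num
  -- rounds finset
  have hroundsbound : ∀ a ∈ Finset.range k0, a < g := fun a ha =>
    lt_of_lt_of_le (Finset.mem_range.mp ha) hk0g
  set rounds : Finset (Fin g) := Finset.attachFin (Finset.range k0) hroundsbound with hrounds
  have hroundscard : rounds.card = k0 := by
    rw [hrounds, Finset.card_attachFin, Finset.card_range]
  have hmemrounds : ∀ ρ : Fin g, ρ ∈ rounds ↔ ρ.val < k0 := by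
    intro ρ
    rw [hrounds, Finset.mem_attachFin, Finset.mem_range]
  set ρlast : Fin g := ⟨k0 % g, Nat.mod_lt _ hg⟩ with hρlast
  have hρlastval : t' ≠ 0 → (ρlast : ℕ) = k0 := by
    intro h0
    have : k0 < g := by
      have : k = k0 + 1 := by simp [hk, h0]
      omega
    simp [hρlast, Nat.mod_eq_of_lt this]
  have hcompl : ∀ r : Recv m s, (r.val)ᶜ.card = n := by
    intro r
    rw [Finset.card_compl, Fintype.card_fin, r.prop]
  by_cases hcase : t' ≠ 0 ∧ s + t' < n
  · -- uncoded tail scheme, rate s + t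
    obtain ⟨h0, hstn⟩ := hcase
    have hk0ltg : k0 < g := by
      have : k = k0 + 1 := by simp [hk, h0]
      omega
    have hρl : (ρlast : ℕ) = k0 := hρlastval h0
    have hstm : s + t' ≤ m := le_trans (le_of_lt hstn) hnm
    set l : ℕ := k0 * n + (s + t') with hl
    -- uncoded message set
    have hSbound : ∀ a ∈ Finset.range (s + t'), a < m := fun a ha =>
      lt_of_lt_of_le (Finset.mem_range.mp ha) hstm
    set S : Finset (Fin m) := Finset.attachFin (Finset.range (s + t')) hSbound with hS
    have hScard : S.card = s + t' := by
      rw [hS, Finset.card_attachFin, Finset.card_range]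
    have hmemS : ∀ j : Fin m, j ∈ S ↔ j.val < s + t' := fun j => by
      rw [hS, Finset.mem_attachFin, Finset.mem_range]
    have hBex : ∀ r : Recv m s, ∃ B ⊆ S \ r.val, B.card = t' := by
      intro r
      apply Finset.exists_subset_card_eq
      have h1 : S.card - r.val.card ≤ (S \ r.val).card := Finset.le_card_sdiff _ _
      rw [hScard, r.prop] at h1
      omega
    choose Bset hBsub hBcard using hBex
    set D : Recv m s → Finset (Fin m × Fin g) :=
      fun r => ((r.val)ᶜ ×ˢ rounds) ∪ (Bset r ×ˢ {ρlast}) with hD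
    set enc : ((Fin m × Fin g) → Fin 1 → ZMod p) → Fin l → ZMod p := fun X z =>
      if hz : z.val < k0 * n then
        ∑ j : Fin m, Stmt8Aux.vmat p m n ⟨z.val % n, Nat.mod_lt _ hn0⟩ j *
          X (j, ⟨z.val / n, lt_of_lt_of_le ((Nat.div_lt_iff_lt_mul hn0).mpr hz) hk0g⟩) 0
      else
        X (⟨z.val - k0 * n, by
          have := z.isLt
          simp only [hl] at this
          omega⟩, ρlast) 0 with henc
    set dec : (r : Recv m s) → (Fin l → ZMod p) →
        ({j : Fin m × Fin g // j.1 ∈ r.val} → Fin 1 → ZMod p) →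
        (Fin m × Fin g) → Fin 1 → ZMod p := fun r b side j _ =>
      if hρ : j.2.val < k0 then
        Stmt8Aux.recover p m n r.val (fun a => side ⟨(a.1, j.2), a.2⟩ 0)
          (fun i : Fin n => b ⟨j.2.val * n + i.val, by
            have h1 : j.2.val * n + i.val < (j.2.val + 1) * n := by
              have := i.isLt; nlinarith
            have h2 : (j.2.val + 1) * n ≤ k0 * n := Nat.mul_le_mul_right n hρ
            simp only [hl]; omega⟩) j.1
      else if hj : j.1.val < s + t' then
        b ⟨k0 * n + j.1.val, by simp only [hl]; omega⟩
      else 0 with hdec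
    refine ⟨ZMod p, inferInstance, inferInstance, 1, l, Nat.one_pos, D, enc, dec, ?_, ?_, ?_, ?_⟩
    · -- cardinality of D
      intro r
      have hdisj : Disjoint ((r.val)ᶜ ×ˢ rounds) (Bset r ×ˢ {ρlast}) := by
        rw [Finset.disjoint_left]
        rintro ⟨j, ρ⟩ h1 h2
        rw [Finset.mem_product] at h1 h2
        have hρ1 : ρ.val < k0 := (hmemrounds ρ).mp h1.2
        have hρ2 : ρ = ρlast := Finset.mem_singleton.mp h2.2
        rw [hρ2, hρl] at hρ1
        omega
      rw [hD, Finset.card_union_of_disjoint hdisj, Finset.card_product, Finset.card_product,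
        hcompl r, hroundscard, hBcard r, Finset.card_singleton]
      omega
    · -- D avoids side information
      intro r j hj
      rw [hD, Finset.mem_union] at hj
      rcases hj with hj | hj
      · exact Finset.mem_compl.mp (Finset.mem_product.mp hj).1
      · have := hBsub r (Finset.mem_product.mp hj).1
        exact (Finset.mem_sdiff.mp this).2
    · -- decoding correctness
      clear_value dec enc D rounds ρlast
      intro r X jp hjp
      have hround : ∀ (ρ : Fin g), ρ.val < k0 →
          ∀ j : Fin m, dec r (enc X) (fun j' => X j'.val) (j, ρ) = X (j, ρ) := by
        intro ρ hρ j
        funext i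
        have hi : i = 0 := Subsingleton.elim i 0
        subst hi
        simp only [hdec]
        rw [dif_pos hρ]
        have hcarg : ∀ (hb : ∀ i : Fin n, ρ.val * n + i.val < l),
            (fun i : Fin n => enc X ⟨ρ.val * n + i.val, hb i⟩) =
            (fun i : Fin n => ∑ j' : Fin m, Stmt8Aux.vmat p m n i j' * X (j', ρ) 0) := by
          intro hb
          funext i
          have hlt : ρ.val * n + i.val < k0 * n := by
            have h1 : ρ.val * n + i.val < (ρ.val + 1) * n := by
              have := i.isLt; nlinarith
            have h2 : (ρ.val + 1) * n ≤ k0 * n := Nat.mul_le_mul_right n hρ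
            omega
          simp only [henc]
          rw [dif_pos hlt]
          have hmod : (ρ.val * n + i.val) % n = i.val := by
            rw [mul_comm, Nat.mul_add_mod, Nat.mod_eq_of_lt i.isLt]
          have hdiv : (ρ.val * n + i.val) / n = ρ.val := by
            rw [mul_comm, Nat.mul_add_div hn0, Nat.div_eq_of_lt i.isLt, add_zero]
          simp only [hmod, hdiv, Fin.eta]
        rw [hcarg]
        exact congrFun (Stmt8Aux.recover_eq hpp hpm r.val (hcompl r)
          (fun j' : Fin m => X (j', ρ) 0)) j
      rw [hD, Finset.mem_union] at hjp
      rcases hjp with hjp | hjp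
      · rw [Finset.mem_product] at hjp
        have hρ : jp.2.val < k0 := (hmemrounds jp.2).mp hjp.2
        have := hround jp.2 hρ jp.1
        simpa using this
      · rw [Finset.mem_product] at hjp
        obtain ⟨j1, ρ2⟩ := jp
        simp only at hjp
        have hjS : j1 ∈ S := (Finset.mem_sdiff.mp (hBsub r hjp.1)).1
        have hjlt : j1.val < s + t' := (hmemS j1).mp hjS
        have hρeq : ρ2 = ρlast := Finset.mem_singleton.mp hjp.2
        funext i
        have hi : i = 0 := Subsingleton.elim i 0
        subst hi
        simp only [hdec]
        have hρnot : ¬ ((j1, ρ2).2.val < k0) := by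
          show ¬ (ρ2.val < k0)
          rw [hρeq, hρl]
          omega
        rw [dif_neg hρnot, dif_pos hjlt]
        simp only [henc]
        have hnot2 : ¬ (k0 * n + j1.val < k0 * n) := by omega
        rw [dif_neg hnot2]
        simp only [Nat.add_sub_cancel_left, Fin.eta, ← hρeq]
    · -- rate bound
      have hlval : l = s + t := by
        simp only [hl]; omega
      have hlkn : l ≤ k * n := by
        have hkk : k = k0 + 1 := by simp only [hk, if_neg h0]
        simp only [hl, hkk]; omega
      rw [Nat.cast_one, div_one, hceil]
      apply le_min
      · rw [hlval]; push_cast; linarith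
      · have : (l : ℝ) ≤ ((k * n : ℕ) : ℝ) := by exact_mod_cast hlkn
        push_cast at this ⊢
        linarith
  · -- pure MDS scheme, rate k * n
    push_neg at hcase
    set l : ℕ := k * n with hl
    have hBex : ∀ r : Recv m s, ∃ B ⊆ (r.val)ᶜ, B.card = t' := by
      intro r
      apply Finset.exists_subset_card_eq
      rw [hcompl r]
      omega
    choose Bset hBsub hBcard using hBex
    set D : Recv m s → Finset (Fin m × Fin g) :=
      fun r => ((r.val)ᶜ ×ˢ rounds) ∪ (Bset r ×ˢ {ρlast}) with hD
    set enc : ((Fin m × Fin g) → Fin 1 → ZMod p) → Fin l → ZMod p := fun X z =>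
      ∑ j : Fin m, Stmt8Aux.vmat p m n ⟨z.val % n, Nat.mod_lt _ hn0⟩ j *
        X (j, ⟨z.val / n, lt_of_lt_of_le ((Nat.div_lt_iff_lt_mul hn0).mpr z.isLt) hkg⟩) 0
      with henc
    set dec : (r : Recv m s) → (Fin l → ZMod p) →
        ({j : Fin m × Fin g // j.1 ∈ r.val} → Fin 1 → ZMod p) →
        (Fin m × Fin g) → Fin 1 → ZMod p := fun r b side j _ =>
      if hρ : j.2.val < k then
        Stmt8Aux.recover p m n r.val (fun a => side ⟨(a.1, j.2), a.2⟩ 0)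
          (fun i : Fin n => b ⟨j.2.val * n + i.val, by
            have h1 : j.2.val * n + i.val < (j.2.val + 1) * n := by
              have := i.isLt; nlinarith
            have h2 : (j.2.val + 1) * n ≤ k * n := Nat.mul_le_mul_right n hρ
            simp only [hl]; omega⟩) j.1
      else 0 with hdec
    refine ⟨ZMod p, inferInstance, inferInstance, 1, l, Nat.one_pos, D, enc, dec, ?_, ?_, ?_, ?_⟩
    · intro r
      have hdisj : Disjoint ((r.val)ᶜ ×ˢ rounds) (Bset r ×ˢ {ρlast}) := by
        rw [Finset.disjoint_left]
        rintro ⟨j, ρ⟩ h1 h2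
        rw [Finset.mem_product] at h1 h2
        have hρ1 : ρ.val < k0 := (hmemrounds ρ).mp h1.2
        by_cases h0 : t' = 0
        · have : Bset r = ∅ := Finset.card_eq_zero.mp (by rw [hBcard r, h0])
          rw [this] at h2
          exact absurd h2.1 (Finset.notMem_empty _)
        · have hρ2 : ρ = ρlast := Finset.mem_singleton.mp h2.2
          rw [hρ2, hρlastval h0] at hρ1
          omega
      rw [hD, Finset.card_union_of_disjoint hdisj, Finset.card_product, Finset.card_product,
        hcompl r, hroundscard, hBcard r, Finset.card_singleton]
      omega
    · intro r j hj
      rw [hD, Finset.mem_union] at hj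
      rcases hj with hj | hj
      · exact Finset.mem_compl.mp (Finset.mem_product.mp hj).1
      · exact Finset.mem_compl.mp (hBsub r (Finset.mem_product.mp hj).1)
    · clear_value dec enc D rounds ρlast
      intro r X jp hjp
      have hround : ∀ (ρ : Fin g), ρ.val < k →
          ∀ j : Fin m, dec r (enc X) (fun j' => X j'.val) (j, ρ) = X (j, ρ) := by
        intro ρ hρ j
        funext i
        have hi : i = 0 := Subsingleton.elim i 0
        subst hi
        simp only [hdec]
        rw [dif_pos hρ]
        have hcarg : ∀ (hb : ∀ i : Fin n, ρ.val * n + i.val < l),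
            (fun i : Fin n => enc X ⟨ρ.val * n + i.val, hb i⟩) =
            (fun i : Fin n => ∑ j' : Fin m, Stmt8Aux.vmat p m n i j' * X (j', ρ) 0) := by
          intro hb
          funext i
          have hmod : (ρ.val * n + i.val) % n = i.val := by
            rw [mul_comm, Nat.mul_add_mod, Nat.mod_eq_of_lt i.isLt]
          have hdiv : (ρ.val * n + i.val) / n = ρ.val := by
            rw [mul_comm, Nat.mul_add_div hn0, Nat.div_eq_of_lt i.isLt, add_zero]
          simp only [henc]
          congr 1
          funext j'
          simp only [hmod, hdiv, Fin.eta]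
        rw [hcarg]
        exact congrFun (Stmt8Aux.recover_eq hpp hpm r.val (hcompl r)
          (fun j' : Fin m => X (j', ρ) 0)) j
      rw [hD, Finset.mem_union] at hjp
      rcases hjp with hjp | hjp
      · rw [Finset.mem_product] at hjp
        have hρ : jp.2.val < k := lt_of_lt_of_le ((hmemrounds jp.2).mp hjp.2) hk0ltk
        have := hround jp.2 hρ jp.1
        simpa using this
      · rw [Finset.mem_product] at hjp
        have h0 : t' ≠ 0 := by
          intro h0
          have : Bset r = ∅ := Finset.card_eq_zero.mp (by rw [hBcard r, h0])
          rw [this] at hjp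
          exact absurd hjp.1 (Finset.notMem_empty _)
        have hρeq : jp.2 = ρlast := Finset.mem_singleton.mp hjp.2
        have hρ : jp.2.val < k := by
          rw [hρeq, hρlastval h0]
          simp [hk, h0]
        have := hround jp.2 hρ jp.1
        simpa using this
    · -- rate bound
      have hlst : l ≤ s + t := by
        by_cases h0 : t' = 0
        · have hkk : k = k0 := by simp only [hk, if_pos h0]
          simp only [hl, hkk]; omega
        · have hsn : n ≤ s + t' := hcase h0
          have hkk : k = k0 + 1 := by simp only [hk, if_neg h0]
          simp only [hl, hkk]; omega
      rw [Nat.cast_one, div_one, hceil]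
      apply le_min
      · have : (l : ℝ) ≤ ((s + t : ℕ) : ℝ) := by exact_mod_cast hlst
        push_cast at this ⊢
        linarith
      · have : (l : ℝ) = ((k * n : ℕ) : ℝ) := by exact_mod_cast rfl
        push_cast at this ⊢
        linarith
end

section
/- Let m, s, g, t satisfy t > (g−1)(m−s) and s + t ≤ g(m−s), and let D be a decoding choice for the g-group complete-{s} PICOD(t) problem with m groups. If there exists a receiver r that decodes s + t distinct messages by sequentially emulating other receivers starting from its own decoding function, then G_D contains an acyclic induced subgraph with s + t nodes having distinct message labels; hence |MAIS(G_D)| ≥ s + t. -/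
/-- Let `t > (g-1)(m-s)` and `s + t ≤ g(m-s)`, and let `D` be a decoding
choice. If some receiver `r` decodes `s + t` distinct messages `js 0, …, js (s+t-1)` (none
in its side information) by sequentially emulating receivers `rk i` with `js i ∈ D (rk i)`
and `M_{rk i} ⊆ M_r ∪ {js 0, …, js (i-1)}`, then `G_D` contains an acyclic induced subgraph
with `s + t` nodes having distinct message labels (hence `|MAIS(G_D)| ≥ s + t`). -/
theorem stmt9 (m g s t : ℕ) (hm : 0 < m) (hg : 0 < g) (ht : 0 < t) (hsm : s < m)
    (h1 : t > (g - 1) * (m - s)) (h2 : s + t ≤ g * (m - s))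
    (D : Recv m s → Finset (Fin m × Fin g))
    (hDcard : ∀ r, (D r).card = t)
    (hDdisj : ∀ r, ∀ j ∈ D r, j.1 ∉ r.val)
    (r : Recv m s)
    (js : Fin (s + t) → Fin m × Fin g)
    (rk : Fin (s + t) → Recv m s)
    (hinj : Function.Injective js)
    (hnew : ∀ i, (js i).1 ∉ r.val)
    (hdec : ∀ i, js i ∈ D (rk i))
    (hside : ∀ i, ∀ x : Fin m × Fin g, x.1 ∈ (rk i).val →
      x.1 ∈ r.val ∨ ∃ i' : Fin (s + t), i' < i ∧ js i' = x) :
    ∃ GS : Finset (PNode m g s), GS.card = s + t ∧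
      (∀ u ∈ GS, u.2 ∈ D u.1) ∧ distinctLabels GS ∧ inducedAcyclic GS := by

  classical
  set f : Fin (s + t) → PNode m g s := fun i => (rk i, js i) with hf
  have hfinj : Function.Injective f := by
    intro a b hab
    exact hinj (congrArg Prod.snd hab)
  refine ⟨Finset.image f Finset.univ, ?_, ?_, ?_, ?_⟩
  · rw [Finset.card_image_of_injective _ hfinj, Finset.card_univ, Fintype.card_fin]
  · intro u hu
    obtain ⟨i, _, rfl⟩ := Finset.mem_image.mp hu
    exact hdec i
  · intro u hu v hv huv
    obtain ⟨i, _, rfl⟩ := Finset.mem_image.mp hu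
    obtain ⟨i', _, rfl⟩ := Finset.mem_image.mp hv
    have : i = i' := hinj huv
    rw [this]
  · -- acyclicity
    set GS := Finset.image f Finset.univ with hGS
    set φ : PNode m g s → ℕ := fun u =>
      if h : ∃ i : Fin (s + t), js i = u.2 then (h.choose : ℕ) else 0 with hφ
    have hφf : ∀ i : Fin (s + t), φ (f i) = (i : ℕ) := by
      intro i
      have h : ∃ i' : Fin (s + t), js i' = (f i).2 := ⟨i, rfl⟩
      simp only [hφ, dif_pos h]
      have := h.choose_spec
      have : h.choose = i := hinj this
      rw [this]
    have key : ∀ a b, (a ∈ GS ∧ b ∈ GS ∧ picodEdge a b) → φ b < φ a := by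
      rintro a b ⟨ha, hb, hab⟩
      obtain ⟨i, _, rfl⟩ := Finset.mem_image.mp ha
      obtain ⟨i', _, rfl⟩ := Finset.mem_image.mp hb
      have hedge : (js i').1 ∈ (rk i).val := hab
      rcases hside i (js i') hedge with h | ⟨i'', hlt, heq⟩
      · exact absurd h (hnew i')
      · have : i'' = i' := hinj heq
        rw [hφf, hφf]
        exact_mod_cast this ▸ hlt
    intro u hcyc
    have : ∀ a b, Relation.TransGen (fun a b => a ∈ GS ∧ b ∈ GS ∧ picodEdge a b) a b → φ b < φ a := by
      intro a b h
      induction h with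
      | single h => exact key _ _ h
      | tail _ h ih => exact lt_trans (key _ _ h) ih
    exact absurd (this u u hcyc) (lt_irrefl _)
end

section
/- Let a_1 ≥ a_2 ≥ … ≥ a_m be nonnegative integers with a_i ≤ g, and suppose a_1 − a_m > 1. Define b_1 = a_1 − 1, b_i = a_i for 1 < i < m, and b_m = a_m + 1. Then the sum of the m−s smallest values among b_1,…,b_m is at least the sum of the m−s smallest values among a_1,…,a_m, and the sum of the m−s largest values among b_1,…,b_m is at most the sum of the m−s largest values among a_1,…,a_m. -/
/-- **balancing step.** Let `a_1 ≥ … ≥ a_m` (here `m = n + 2 ≥ 2`) be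
nonnegative integers bounded by `g` with `a_1 - a_m > 1`, and let `b` decrement the first
entry and increment the last. Then the sum of the `m - s` smallest values among the `b`'s
is at least the sum of the `m - s` smallest values among the `a`'s (every `(m-s)`-subset
sum of `b` dominates some `(m-s)`-subset sum of `a`), and the sum of the `m - s` largest
values among the `b`'s is at most that of the `a`'s. -/
theorem stmt18 (n s g : ℕ) (hs : 1 ≤ s) (hsm : s < n + 2) (hg : 1 ≤ g)
    (a : Fin (n + 2) → ℕ)
    (hmono : ∀ i j : Fin (n + 2), i ≤ j → a j ≤ a i)
    (hbound : ∀ i, a i ≤ g)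
    (hgap : a (Fin.last (n + 1)) + 2 ≤ a 0)
    (b : Fin (n + 2) → ℕ)
    (hb : ∀ i, b i =
      if i = 0 then a 0 - 1 else if i = Fin.last (n + 1) then a i + 1 else a i) :
    (∀ T : Finset (Fin (n + 2)), T.card = n + 2 - s →
      ∃ U : Finset (Fin (n + 2)), U.card = n + 2 - s ∧ ∑ i ∈ U, a i ≤ ∑ i ∈ T, b i) ∧
    (∀ T : Finset (Fin (n + 2)), T.card = n + 2 - s →
      ∃ U : Finset (Fin (n + 2)), U.card = n + 2 - s ∧ ∑ i ∈ T, b i ≤ ∑ i ∈ U, a i) := by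
  have h0l : (0 : Fin (n + 2)) ≠ Fin.last (n + 1) := by
    intro h
    have := congrArg Fin.val h
    simp [Fin.last] at this
  have hb0 : b 0 = a 0 - 1 := by simp [hb]
  have hbl : b (Fin.last (n + 1)) = a (Fin.last (n + 1)) + 1 := by
    simp [hb, h0l.symm]
  have hbeq : ∀ i : Fin (n + 2), i ≠ 0 → i ≠ Fin.last (n + 1) → b i = a i := by
    intro i h1 h2; simp [hb, h1, h2]
  have hsum : ∀ S : Finset (Fin (n + 2)), (0 : Fin (n + 2)) ∉ S →
      Fin.last (n + 1) ∉ S → ∑ i ∈ S, b i = ∑ i ∈ S, a i := by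
    intro S h1 h2
    refine Finset.sum_congr rfl fun i hi => hbeq i ?_ ?_ <;> rintro rfl <;> tauto
  constructor
  · intro T hT
    by_cases h0 : (0 : Fin (n + 2)) ∈ T
    · by_cases hl : Fin.last (n + 1) ∈ T
      · -- both: sums equal
        refine ⟨T, hT, le_of_eq ?_⟩
        have hl' : Fin.last (n + 1) ∈ T.erase 0 := Finset.mem_erase.2 ⟨h0l.symm, hl⟩
        rw [← Finset.add_sum_erase T b h0, ← Finset.add_sum_erase T a h0,
          ← Finset.add_sum_erase _ b hl', ← Finset.add_sum_erase _ a hl',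
          hsum _ (fun h => (Finset.mem_erase.1 (Finset.mem_erase.1 h).2).1 rfl)
            (fun h => (Finset.mem_erase.1 h).1 rfl), hb0, hbl]
        omega
      · -- 0 ∈ T, last ∉ T : swap 0 for last
        refine ⟨insert (Fin.last (n + 1)) (T.erase 0), ?_, ?_⟩
        · rw [Finset.card_insert_of_notMem (fun h => hl (Finset.mem_of_mem_erase h)),
            Finset.card_erase_of_mem h0, hT]
          omega
        · rw [Finset.sum_insert (fun h => hl (Finset.mem_of_mem_erase h)),
            ← Finset.add_sum_erase T b h0, hb0,
            hsum _ (fun h => (Finset.mem_erase.1 h).1 rfl)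
              (fun h => hl (Finset.mem_of_mem_erase h))]
          exact Nat.add_le_add (by omega) le_rfl
    · by_cases hl : Fin.last (n + 1) ∈ T
      · refine ⟨T, hT, ?_⟩
        rw [← Finset.add_sum_erase T b hl, ← Finset.add_sum_erase T a hl, hbl,
          hsum _ (fun h => h0 (Finset.mem_of_mem_erase h))
            (fun h => (Finset.mem_erase.1 h).1 rfl)]
        omega
      · exact ⟨T, hT, le_of_eq (hsum T h0 hl).symm⟩
  · intro T hT
    by_cases h0 : (0 : Fin (n + 2)) ∈ T
    · by_cases hl : Fin.last (n + 1) ∈ T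
      · refine ⟨T, hT, le_of_eq ?_⟩
        have hl' : Fin.last (n + 1) ∈ T.erase 0 := Finset.mem_erase.2 ⟨h0l.symm, hl⟩
        rw [← Finset.add_sum_erase T b h0, ← Finset.add_sum_erase T a h0,
          ← Finset.add_sum_erase _ b hl', ← Finset.add_sum_erase _ a hl',
          hsum _ (fun h => (Finset.mem_erase.1 (Finset.mem_erase.1 h).2).1 rfl)
            (fun h => (Finset.mem_erase.1 h).1 rfl), hb0, hbl]
        omega
      · refine ⟨T, hT, ?_⟩
        rw [← Finset.add_sum_erase T b h0, ← Finset.add_sum_erase T a h0, hb0,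
          hsum _ (fun h => (Finset.mem_erase.1 h).1 rfl)
            (fun h => hl (Finset.mem_of_mem_erase h))]
        omega
    · by_cases hl : Fin.last (n + 1) ∈ T
      · -- 0 ∉ T, last ∈ T : swap last for 0
        refine ⟨insert 0 (T.erase (Fin.last (n + 1))), ?_, ?_⟩
        · rw [Finset.card_insert_of_notMem (fun h => h0 (Finset.mem_of_mem_erase h)),
            Finset.card_erase_of_mem hl, hT]
          omega
        · rw [Finset.sum_insert (fun h => h0 (Finset.mem_of_mem_erase h)),
            ← Finset.add_sum_erase T b hl, hbl,
            hsum _ (fun h => h0 (Finset.mem_of_mem_erase h))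
              (fun h => (Finset.mem_erase.1 h).1 rfl)]
          exact Nat.add_le_add (by omega) le_rfl
      · exact ⟨T, hT, le_of_eq (hsum T h0 hl)⟩
end
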